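/- Let p₁,…,p_n be i.i.d. Uniform(0,1) (n ≥ 2) and define the statistic Z_n = n·K_2(1/n, p_(1)) = (1/2)·n·(1/n − p_(1))²/(p_(1)(1−p_(1))), where p_(1) is the minimum. Then the limiting tail satisfies: n·p_(1) converges in distribution to an Exponential(1) random variable E, the statistic converges in distribution to (1/2)(1/√E − √E)², and P((1/2)(1/√E − √E)² ≥ z) ~ 1/(2z) as z → ∞. -/

import Mathlib

open MeasureTheory ProbabilityTheory Real Set Filter Topology

/-- The limiting function `g(E) = (1/2)(1/√E − √E)²`. -/
noncomputable def heavyTailFun (x : ℝ) : ℝ :=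
  (1 / 2) * (1 / Real.sqrt x - Real.sqrt x) ^ 2

/-!
Since `P(p_(1) > t) = (1 - t)ⁿ`, we get `P(a_n ≤ n p_(1) ≤ b_n) = (1 - a_n/n)ⁿ - (1 - b_n/n)ⁿ`,
which tends to `e^{-A} - e^{-B}` whenever `a_n → A` and `b_n → B`. Both events in question are
quadratic conditions on `x = n p_(1)`, resp. `x = E`: `Z_n ≤ z` iff
`(1 + 2z/n) x² - 2(1 + z) x + 1 ≤ 0`, and `g(x) ≤ z` iff `x² - 2(1 + z) x + 1 ≤ 0`. Their roots
depend continuously on the leading coefficient `1 + 2z/n → 1`, which gives the convergence in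
distribution. For the tail, `g(E) ≥ z` iff `E ≤ x₋` or `E ≥ x₊`, where `x₋ x₊ = 1` and
`x₊ ≈ 2z`; hence `P(g(E) ≥ z) = 1 - e^{-x₋} + e^{-x₊} ≈ x₋ ≈ 1/(2z)`.
-/

lemma lt_ciInf_iff_of_finite {ι α : Type*} [ConditionallyCompleteLinearOrder α] [Nonempty ι]
    [Finite ι] {f : ι → α} {a : α} : a < ⨅ i, f i ↔ ∀ i, a < f i := by
  obtain ⟨j, hj⟩ := exists_eq_ciInf_of_finite (f := f)
  exact ⟨fun h i => h.trans_le (ciInf_le (Finite.bddBelow_range f) i), fun h => hj ▸ h j⟩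

section QuadraticRoots

/-- The roots of `q x² - 2 b x + 1`. -/
noncomputable def quadRootLower (b q : ℝ) : ℝ := (b - √(b ^ 2 - q)) / q

noncomputable def quadRootUpper (b q : ℝ) : ℝ := (b + √(b ^ 2 - q)) / q

variable {b q : ℝ}

lemma quadRootLower_pos (hb : 0 < b) (hq : 0 < q) : 0 < quadRootLower b q := by
  have : √(b ^ 2 - q) < b := (Real.sqrt_lt' hb).2 (by linarith)
  exact div_pos (by linarith) hq

lemma quadRootLower_le_quadRootUpper (hq : 0 < q) : quadRootLower b q ≤ quadRootUpper b q := by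
  have := Real.sqrt_nonneg (b ^ 2 - q)
  exact div_le_div_of_nonneg_right (by linarith) hq.le

lemma quadRootLower_lt_quadRootUpper (hq : 0 < q) (hd : q < b ^ 2) :
    quadRootLower b q < quadRootUpper b q := by
  have := Real.sqrt_pos.2 (sub_pos.2 hd)
  exact div_lt_div_of_pos_right (by linarith) hq

lemma quadRootLower_mul_quadRootUpper (hq : 0 < q) (hd : q ≤ b ^ 2) :
    quadRootLower b q * quadRootUpper b q = q⁻¹ := by
  have := Real.sq_sqrt (sub_nonneg.2 hd)
  unfold quadRootLower quadRootUpper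
  field_simp
  linear_combination -this

lemma quadratic_eq_mul_sub_roots (hq : 0 < q) (hd : q ≤ b ^ 2) (x : ℝ) :
    q * x ^ 2 - 2 * b * x + 1 = q * ((x - quadRootLower b q) * (x - quadRootUpper b q)) := by
  have hprod : q * (quadRootLower b q * quadRootUpper b q) = 1 := by
    rw [quadRootLower_mul_quadRootUpper hq hd, mul_inv_cancel₀ hq.ne']
  have hsum : q * (quadRootLower b q + quadRootUpper b q) = 2 * b := by
    unfold quadRootLower quadRootUpper; field_simp; ring
  linear_combination x * hsum - hprod

lemma quadratic_nonpos_iff (hq : 0 < q) (hd : q ≤ b ^ 2) {x : ℝ} :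
    q * x ^ 2 - 2 * b * x + 1 ≤ 0 ↔ quadRootLower b q ≤ x ∧ x ≤ quadRootUpper b q := by
  rw [quadratic_eq_mul_sub_roots hq hd, ← mul_zero q, mul_le_mul_iff_right₀ hq,
    sub_mul_sub_nonpos_iff x (quadRootLower_le_quadRootUpper hq)]

lemma quadratic_nonneg_iff (hq : 0 < q) (hd : q ≤ b ^ 2) {x : ℝ} :
    0 ≤ q * x ^ 2 - 2 * b * x + 1 ↔ x ≤ quadRootLower b q ∨ quadRootUpper b q ≤ x := by
  rw [quadratic_eq_mul_sub_roots hq hd, mul_nonneg_iff_of_pos_left hq,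
    sub_mul_sub_nonneg_iff x (quadRootLower_le_quadRootUpper hq)]

lemma continuousAt_quadRootLower (hq : q ≠ 0) : ContinuousAt (quadRootLower b) q := by
  unfold quadRootLower; fun_prop (disch := exact hq)

lemma continuousAt_quadRootUpper (hq : q ≠ 0) : ContinuousAt (quadRootUpper b) q := by
  unfold quadRootUpper; fun_prop (disch := exact hq)

end QuadraticRoots

lemma heavyTailFun_nonneg (x : ℝ) : 0 ≤ heavyTailFun x := by
  unfold heavyTailFun; positivity

lemma heavyTailFun_sub_eq {x : ℝ} (hx : 0 < x) (z : ℝ) :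
    heavyTailFun x - z = (1 * x ^ 2 - 2 * (1 + z) * x + 1) / (2 * x) := by
  have hs : √x ≠ 0 := (Real.sqrt_pos.2 hx).ne'
  have : 1 / √x - √x = (1 - x) / √x := by field_simp; rw [Real.sq_sqrt hx.le]
  rw [heavyTailFun, this, div_pow, Real.sq_sqrt hx.le]
  field_simp
  ring

lemma heavyTailFun_le_iff {x z : ℝ} (hx : 0 < x) (hz : 0 ≤ z) :
    heavyTailFun x ≤ z ↔ quadRootLower (1 + z) 1 ≤ x ∧ x ≤ quadRootUpper (1 + z) 1 := by
  rw [← sub_nonpos, heavyTailFun_sub_eq hx, div_le_iff₀ (by positivity), zero_mul,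
    quadratic_nonpos_iff one_pos (by nlinarith)]

lemma le_heavyTailFun_iff {x z : ℝ} (hx : 0 < x) (hz : 0 ≤ z) :
    z ≤ heavyTailFun x ↔ x ≤ quadRootLower (1 + z) 1 ∨ quadRootUpper (1 + z) 1 ≤ x := by
  rw [← sub_nonneg, heavyTailFun_sub_eq hx, le_div_iff₀ (by positivity), zero_mul,
    quadratic_nonneg_iff one_pos (by nlinarith)]

/-- `n K₂(1/n, m)`, where `K₂(u, v) = (u - v)² / (2 v (1 - v))`. -/
noncomputable def gofStatistic (n : ℕ) (m : ℝ) : ℝ :=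
  (1 / 2) * (n : ℝ) * ((1 / (n : ℝ) - m) ^ 2 / (m * (1 - m)))

lemma gofStatistic_nonneg (n : ℕ) {m : ℝ} (hm : m ∈ Ioo 0 1) : 0 ≤ gofStatistic n m := by
  have := mul_pos hm.1 (sub_pos.2 hm.2)
  unfold gofStatistic
  positivity

lemma gofStatistic_le_iff {n : ℕ} (hn : n ≠ 0) {m z : ℝ} (hm : m ∈ Ioo 0 1) :
    gofStatistic n m ≤ z ↔
      (1 + 2 * z / n) * (n * m) ^ 2 - 2 * (1 + z) * (n * m) + 1 ≤ 0 := by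
  have hn' : (0 : ℝ) < n := by positivity
  have hm0 : m ≠ 0 := hm.1.ne'
  have hm1 : 1 - m ≠ 0 := (sub_pos.2 hm.2).ne'
  have hD : 0 < 2 * n * (m * (1 - m)) := by
    have := mul_pos hm.1 (sub_pos.2 hm.2); positivity
  have key : gofStatistic n m - z =
      ((1 + 2 * z / n) * (n * m) ^ 2 - 2 * (1 + z) * (n * m) + 1) / (2 * n * (m * (1 - m))) := by
    unfold gofStatistic
    field_simp
    ring
  rw [← sub_nonpos, key, div_le_iff₀ hD, zero_mul]

lemma gofStatistic_le_iff_mem_Icc {n : ℕ} (hn : n ≠ 0) {m z : ℝ} (hm : m ∈ Ioo 0 1) (hz : 0 ≤ z) :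
    gofStatistic n m ≤ z ↔ quadRootLower (1 + z) (1 + 2 * z / n) ≤ n * m ∧
      n * m ≤ quadRootUpper (1 + z) (1 + 2 * z / n) := by
  have : 2 * z / n ≤ 2 * z :=
    div_le_self (by positivity) (by exact_mod_cast Nat.one_le_iff_ne_zero.2 hn)
  rw [gofStatistic_le_iff hn hm, quadratic_nonpos_iff (by positivity) (by nlinarith)]

section ExponentialMeasure

variable {r : ℝ}

instance (r : ℝ) : NullSingletonClass (expMeasure r) := by
  unfold expMeasure gammaMeasure; infer_instance

lemma expMeasure_real_Iic (hr : 0 < r) (x : ℝ) :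
    (expMeasure r).real (Iic x) = if 0 ≤ x then 1 - exp (-(r * x)) else 0 := by
  have := isProbabilityMeasure_expMeasure hr
  rw [← cdf_eq_real, cdf_expMeasure_eq hr]

lemma expMeasure_real_inter_Ioi (hr : 0 < r) (s : Set ℝ) :
    (expMeasure r).real (s ∩ Ioi 0) = (expMeasure r).real s := by
  have := isProbabilityMeasure_expMeasure hr
  have h : expMeasure r (Ioi 0)ᶜ = 0 := by
    rw [compl_Ioi, ← measureReal_eq_zero_iff, expMeasure_real_Iic hr]; simp
  simp only [measureReal_def, measure_inter_conull h]

lemma expMeasure_real_Ioc (hr : 0 < r) {a b : ℝ} (ha : 0 ≤ a) (hab : a ≤ b) :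
    (expMeasure r).real (Ioc a b) = exp (-(r * a)) - exp (-(r * b)) := by
  have := isProbabilityMeasure_expMeasure hr
  rw [← Iic_sdiff_Iic, measureReal_sdiff (Iic_subset_Iic.2 hab) measurableSet_Iic,
    expMeasure_real_Iic hr, expMeasure_real_Iic hr, if_pos ha, if_pos (ha.trans hab)]
  ring

lemma expMeasure_real_Ioi (hr : 0 < r) {a : ℝ} (ha : 0 ≤ a) :
    (expMeasure r).real (Ioi a) = exp (-(r * a)) := by
  have := isProbabilityMeasure_expMeasure hr
  rw [← compl_Iic, measureReal_compl measurableSet_Iic, probReal_univ, expMeasure_real_Iic hr,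
    if_pos ha]
  ring

end ExponentialMeasure

lemma expMeasure_real_heavyTailFun_le {z : ℝ} (hz : 0 ≤ z) :
    (expMeasure 1).real {x | heavyTailFun x ≤ z} =
      exp (-quadRootLower (1 + z) 1) - exp (-quadRootUpper (1 + z) 1) := by
  have hlo := quadRootLower_pos (by linarith : (0 : ℝ) < 1 + z) one_pos
  have hset : {x | heavyTailFun x ≤ z} ∩ Ioi 0 =
      Icc (quadRootLower (1 + z) 1) (quadRootUpper (1 + z) 1) := by
    ext x
    simp only [mem_inter_iff, mem_ofPred_eq, mem_Ioi, mem_Icc]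
    constructor
    · rintro ⟨h, hx⟩
      exact (heavyTailFun_le_iff hx hz).1 h
    · intro h
      have hx := hlo.trans_le h.1
      exact ⟨(heavyTailFun_le_iff hx hz).2 h, hx⟩
  rw [← expMeasure_real_inter_Ioi one_pos, hset, ← measureReal_congr Ioc_ae_eq_Icc,
    expMeasure_real_Ioc one_pos hlo.le (quadRootLower_le_quadRootUpper one_pos)]
  simp

lemma expMeasure_real_le_heavyTailFun {z : ℝ} (hz : 0 < z) :
    (expMeasure 1).real {x | z ≤ heavyTailFun x} =
      (1 - exp (-quadRootLower (1 + z) 1)) + exp (-quadRootUpper (1 + z) 1) := by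
  have := isProbabilityMeasure_expMeasure one_pos
  have hlo := quadRootLower_pos (by linarith : (0 : ℝ) < 1 + z) one_pos
  have hlohi := quadRootLower_lt_quadRootUpper (b := 1 + z) one_pos (by nlinarith)
  have hset : {x | z ≤ heavyTailFun x} ∩ Ioi 0 =
      Ioc 0 (quadRootLower (1 + z) 1) ∪ Ici (quadRootUpper (1 + z) 1) := by
    ext x
    simp only [mem_inter_iff, mem_ofPred_eq, mem_Ioi, mem_union, mem_Ioc, mem_Ici]
    constructor
    · rintro ⟨h, hx⟩
      exact ((le_heavyTailFun_iff hx hz.le).1 h).imp (⟨hx, ·⟩) id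
    · rintro (h | h)
      · exact ⟨(le_heavyTailFun_iff h.1 hz.le).2 (Or.inl h.2), h.1⟩
      · have hx := (hlo.trans hlohi).trans_le h
        exact ⟨(le_heavyTailFun_iff hx hz.le).2 (Or.inr h), hx⟩
  have hdisj : Disjoint (Ioc 0 (quadRootLower (1 + z) 1)) (Ici (quadRootUpper (1 + z) 1)) :=
    disjoint_left.2 fun x h1 h2 => (h1.2.trans_lt hlohi).not_ge h2
  rw [← expMeasure_real_inter_Ioi one_pos, hset, measureReal_union hdisj measurableSet_Ici,
    ← measureReal_congr Ioi_ae_eq_Ici, expMeasure_real_Ioc one_pos le_rfl hlo.le,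
    expMeasure_real_Ioi one_pos (hlo.trans hlohi).le]
  simp

section TailAsymptotics

variable {z : ℝ}

lemma two_mul_add_one_le_quadRootUpper (hz : 0 ≤ z) : 2 * z + 1 ≤ quadRootUpper (1 + z) 1 := by
  have : z ≤ √((1 + z) ^ 2 - 1) := Real.le_sqrt_of_sq_le (by nlinarith)
  rw [quadRootUpper, div_one]
  linarith

lemma quadRootUpper_le_two_mul_add_two (hz : 0 ≤ z) : quadRootUpper (1 + z) 1 ≤ 2 * z + 2 := by
  have : √((1 + z) ^ 2 - 1) ≤ 1 + z := Real.sqrt_le_iff.2 ⟨by linarith, by linarith⟩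
  rw [quadRootUpper, div_one]
  linarith

lemma quadRootLower_eq_inv (hz : 0 ≤ z) :
    quadRootLower (1 + z) 1 = (quadRootUpper (1 + z) 1)⁻¹ := by
  have := quadRootLower_mul_quadRootUpper (b := 1 + z) one_pos (by nlinarith)
  rw [inv_one] at this
  exact eq_inv_of_mul_eq_one_left this

lemma tendsto_inv_add_one_atTop : Tendsto (fun z : ℝ => (z + 1)⁻¹) atTop (𝓝 0) :=
  tendsto_inv_atTop_zero.comp (tendsto_atTop_add_const_right _ 1 tendsto_id)

lemma tendsto_two_mul_mul_quadRootLower :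
    Tendsto (fun z => 2 * z * quadRootLower (1 + z) 1) atTop (𝓝 1) := by
  have hlower : Tendsto (fun z : ℝ => 1 - (z + 1)⁻¹) atTop (𝓝 1) := by
    simpa using tendsto_inv_add_one_atTop.const_sub 1
  refine tendsto_of_tendsto_of_tendsto_of_le_of_le' hlower tendsto_const_nhds ?_ ?_ <;>
    filter_upwards [eventually_ge_atTop 0] with z hz <;>
    rw [quadRootLower_eq_inv hz, ← div_eq_mul_inv]
  · have := quadRootUpper_le_two_mul_add_two hz
    have : 0 < quadRootUpper (1 + z) 1 := by linarith [two_mul_add_one_le_quadRootUpper hz]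
    calc 1 - (z + 1)⁻¹ = 2 * z / (2 * z + 2) := by field_simp; ring
      _ ≤ 2 * z / quadRootUpper (1 + z) 1 := by gcongr
  · have := two_mul_add_one_le_quadRootUpper hz
    exact div_le_one_of_le₀ (by linarith) (by linarith)

lemma tendsto_quadRootLower_atTop : Tendsto (fun z => quadRootLower (1 + z) 1) atTop (𝓝 0) := by
  refine tendsto_of_tendsto_of_tendsto_of_le_of_le' tendsto_const_nhds tendsto_inv_add_one_atTop
    ?_ ?_ <;> filter_upwards [eventually_ge_atTop 0] with z hz
  · exact (quadRootLower_pos (by linarith) one_pos).le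
  · rw [quadRootLower_eq_inv hz]
    exact inv_anti₀ (by linarith) (by linarith [two_mul_add_one_le_quadRootUpper hz])

lemma mul_exp_neg_le_one_sub_exp_neg (y : ℝ) : y * exp (-y) ≤ 1 - exp (-y) :=
  calc y * exp (-y) ≤ (exp y - 1) * exp (-y) := by gcongr; linarith [add_one_le_exp y]
    _ = 1 - exp (-y) := by rw [sub_mul, ← exp_add]; simp

lemma tendsto_expMeasure_le_heavyTailFun_mul :
    Tendsto (fun z => (expMeasure 1).real {x | z ≤ heavyTailFun x} * (2 * z)) atTop (𝓝 1) := by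
  have hlower : Tendsto (fun z => (1 - exp (-quadRootLower (1 + z) 1)) * (2 * z)) atTop (𝓝 1) := by
    have hexp : Tendsto (fun z => exp (-quadRootLower (1 + z) 1)) atTop (𝓝 1) := by
      simpa only [Function.comp_def, neg_zero, exp_zero] using
        (continuous_exp.tendsto _).comp tendsto_quadRootLower_atTop.neg
    have hmul := tendsto_two_mul_mul_quadRootLower.mul hexp
    rw [one_mul] at hmul
    refine tendsto_of_tendsto_of_tendsto_of_le_of_le' hmul tendsto_two_mul_mul_quadRootLower
      ?_ ?_ <;> filter_upwards [eventually_ge_atTop 0] with z hz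
    · nlinarith [mul_exp_neg_le_one_sub_exp_neg (quadRootLower (1 + z) 1)]
    · nlinarith [one_sub_le_exp_neg (quadRootLower (1 + z) 1)]
  have hupper : Tendsto (fun z => exp (-quadRootUpper (1 + z) 1) * (2 * z)) atTop (𝓝 0) := by
    have hdecay : Tendsto (fun z : ℝ => (2 * z) ^ 1 * exp (-(2 * z))) atTop (𝓝 0) :=
      (tendsto_pow_mul_exp_neg_atTop_nhds_zero 1).comp (tendsto_id.const_mul_atTop two_pos)
    refine tendsto_of_tendsto_of_tendsto_of_le_of_le' tendsto_const_nhds hdecay ?_ ?_ <;>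
      filter_upwards [eventually_ge_atTop 0] with z hz
    · positivity
    · rw [pow_one, mul_comm]
      gcongr
      linarith [two_mul_add_one_le_quadRootUpper hz]
  have hsum := hlower.add hupper
  rw [add_zero] at hsum
  refine hsum.congr' ?_
  filter_upwards [eventually_gt_atTop 0] with z hz
  rw [expMeasure_real_le_heavyTailFun hz, add_mul]

end TailAsymptotics

lemma volume_restrict_Ioo_zero_one_Ioi {t : ℝ} (ht : 0 ≤ t) :
    volume.restrict (Ioo (0 : ℝ) 1) (Ioi t) = ENNReal.ofReal (1 - t) := by
  rw [Measure.restrict_apply measurableSet_Ioi, Ioi_inter_Ioo, max_eq_left ht, Real.volume_Ioo]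

section MinimumOfUniforms

variable {Ω : Type*} [MeasurableSpace Ω] {μ : Measure Ω} {p : ℕ → Ω → ℝ}

lemma measure_forall_fin_mem (hmeas : ∀ i, Measurable (p i)) (hindep : iIndepFun p μ)
    (hunif : ∀ i, μ.map (p i) = volume.restrict (Ioo (0 : ℝ) 1)) (n : ℕ) {S : Set ℝ}
    (hS : MeasurableSet S) :
    μ {ω | ∀ i : Fin n, p i ω ∈ S} = volume.restrict (Ioo (0 : ℝ) 1) S ^ n := by
  have := (hindep.precomp (Fin.val_injective (n := n))).meas_iInter
    (s := fun i : Fin n => p i ⁻¹' S) fun i => ⟨S, hS, rfl⟩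
  simp only [← Measure.map_apply (hmeas _) hS, hunif, Finset.prod_const, Finset.card_univ,
    Fintype.card_fin] at this
  rw [ofPred_forall]
  exact this

lemma measure_lt_iInf_fin (hmeas : ∀ i, Measurable (p i)) (hindep : iIndepFun p μ)
    (hunif : ∀ i, μ.map (p i) = volume.restrict (Ioo (0 : ℝ) 1)) {n : ℕ} (hn : n ≠ 0) {t : ℝ}
    (ht : 0 ≤ t) : μ {ω | t < ⨅ i : Fin n, p i ω} = ENNReal.ofReal (1 - t) ^ n := by
  have : NeZero n := ⟨hn⟩
  simp_rw [lt_ciInf_iff_of_finite]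
  rw [← volume_restrict_Ioo_zero_one_Ioi ht]
  exact measure_forall_fin_mem hmeas hindep hunif n measurableSet_Ioi

lemma measure_le_iInf_fin (hmeas : ∀ i, Measurable (p i)) (hindep : iIndepFun p μ)
    (hunif : ∀ i, μ.map (p i) = volume.restrict (Ioo (0 : ℝ) 1)) {n : ℕ} (hn : n ≠ 0) {t : ℝ}
    (ht : 0 ≤ t) : μ {ω | t ≤ ⨅ i : Fin n, p i ω} = ENNReal.ofReal (1 - t) ^ n := by
  have : NeZero n := ⟨hn⟩
  simp_rw [le_ciInf_iff (Finite.bddBelow_range _)]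
  rw [← volume_restrict_Ioo_zero_one_Ioi ht, measure_congr Ioi_ae_eq_Ici]
  exact measure_forall_fin_mem hmeas hindep hunif n measurableSet_Ici

lemma measureReal_iInf_fin_mem_Icc [IsFiniteMeasure μ] (hmeas : ∀ i, Measurable (p i))
    (hindep : iIndepFun p μ) (hunif : ∀ i, μ.map (p i) = volume.restrict (Ioo (0 : ℝ) 1))
    {n : ℕ} (hn : n ≠ 0) {a b : ℝ} (ha : 0 ≤ a) (hab : a ≤ b) (hb : b ≤ 1) :
    μ.real {ω | a ≤ (⨅ i : Fin n, p i ω) ∧ (⨅ i : Fin n, p i ω) ≤ b} =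
      (1 - a) ^ n - (1 - b) ^ n := by
  have hdiff : {ω | a ≤ (⨅ i : Fin n, p i ω) ∧ (⨅ i : Fin n, p i ω) ≤ b} =
      {ω | a ≤ ⨅ i : Fin n, p i ω} \ {ω | b < ⨅ i : Fin n, p i ω} := by
    ext ω
    simp [not_lt]
  have hsub : {ω | b < ⨅ i : Fin n, p i ω} ⊆ {ω | a ≤ ⨅ i : Fin n, p i ω} :=
    fun ω h => hab.trans (le_of_lt h)
  have hmeas_lt : MeasurableSet {ω | b < ⨅ i : Fin n, p i ω} :=
    measurableSet_lt measurable_const (Measurable.iInf fun i => hmeas i)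
  rw [hdiff, measureReal_sdiff hsub hmeas_lt, measureReal_def, measureReal_def,
    measure_le_iInf_fin hmeas hindep hunif hn ha,
    measure_lt_iInf_fin hmeas hindep hunif hn (ha.trans hab), ENNReal.toReal_pow,
    ENNReal.toReal_pow, ENNReal.toReal_ofReal (by linarith), ENNReal.toReal_ofReal (by linarith)]

lemma ae_forall_mem_Ioo (hmeas : ∀ i, Measurable (p i))
    (hunif : ∀ i, μ.map (p i) = volume.restrict (Ioo (0 : ℝ) 1)) :
    ∀ᵐ ω ∂μ, ∀ i, p i ω ∈ Ioo (0 : ℝ) 1 :=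
  ae_all_iff.2 fun i => ae_of_ae_map (hmeas i).aemeasurable
    (by rw [hunif i]; exact ae_restrict_mem measurableSet_Ioo)

lemma measureReal_iInf_fin_congr (hmeas : ∀ i, Measurable (p i))
    (hunif : ∀ i, μ.map (p i) = volume.restrict (Ioo (0 : ℝ) 1)) {n : ℕ} (hn : n ≠ 0)
    {P Q : ℝ → Prop} (h : ∀ m ∈ Ioo (0 : ℝ) 1, P m ↔ Q m) :
    μ.real {ω | P (⨅ i : Fin n, p i ω)} = μ.real {ω | Q (⨅ i : Fin n, p i ω)} := by
  have : NeZero n := ⟨hn⟩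
  refine measureReal_congr ?_
  filter_upwards [ae_forall_mem_Ioo hmeas hunif] with ω hω
  obtain ⟨j, hj⟩ := exists_eq_ciInf_of_finite (f := fun i : Fin n => p i ω)
  exact propext (h _ (hj ▸ hω j))

lemma measureReal_iInf_fin_eq_zero (hmeas : ∀ i, Measurable (p i))
    (hunif : ∀ i, μ.map (p i) = volume.restrict (Ioo (0 : ℝ) 1)) {n : ℕ} (hn : n ≠ 0)
    {P : ℝ → Prop} (h : ∀ m ∈ Ioo (0 : ℝ) 1, ¬ P m) : μ.real {ω | P (⨅ i : Fin n, p i ω)} = 0 := by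
  rw [measureReal_iInf_fin_congr hmeas hunif hn (Q := fun _ => False)
    fun m hm => iff_false_intro (h m hm)]
  simp

lemma tendsto_measureReal_mul_iInf_fin_mem_Icc [IsFiniteMeasure μ]
    (hmeas : ∀ i, Measurable (p i)) (hindep : iIndepFun p μ)
    (hunif : ∀ i, μ.map (p i) = volume.restrict (Ioo (0 : ℝ) 1)) {a b : ℕ → ℝ} {A B : ℝ}
    (ha : Tendsto a atTop (𝓝 A)) (hb : Tendsto b atTop (𝓝 B)) (ha0 : ∀ n, 0 ≤ a n)
    (hab : ∀ n, a n ≤ b n) :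
    Tendsto (fun n : ℕ => μ.real {ω | a n ≤ n * (⨅ i : Fin n, p i ω) ∧
      n * (⨅ i : Fin n, p i ω) ≤ b n}) atTop (𝓝 (exp (-A) - exp (-B))) := by
  have hpow {c : ℕ → ℝ} {C : ℝ} (hc : Tendsto c atTop (𝓝 C)) :
      Tendsto (fun n : ℕ => (1 + -(c n / n)) ^ n) atTop (𝓝 (exp (-C))) := by
    refine Real.tendsto_one_add_pow_exp_of_tendsto (hc.neg.congr' ?_)
    filter_upwards [eventually_ne_atTop 0] with n hn
    field_simp
  refine ((hpow ha).sub (hpow hb)).congr' ?_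
  filter_upwards [eventually_ne_atTop 0, hb.eventually (gt_mem_nhds (lt_add_one B)),
    tendsto_natCast_atTop_atTop.eventually_ge_atTop (B + 1)] with n hn hbB hBn
  have hn' : (0 : ℝ) < n := by positivity
  have := measureReal_iInf_fin_mem_Icc hmeas hindep hunif hn (div_nonneg (ha0 n) hn'.le)
    (div_le_div_of_nonneg_right (hab n) hn'.le) ((div_le_one hn').2 (by linarith))
  simp_rw [div_le_iff₀' hn', le_div_iff₀' hn'] at this
  rw [this]
  ring

lemma tendsto_measureReal_mul_iInf_fin_le [IsFiniteMeasure μ] (hmeas : ∀ i, Measurable (p i))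
    (hindep : iIndepFun p μ) (hunif : ∀ i, μ.map (p i) = volume.restrict (Ioo (0 : ℝ) 1))
    (z : ℝ) :
    Tendsto (fun n : ℕ => μ.real {ω | (n : ℝ) * (⨅ i : Fin n, p i ω) ≤ z}) atTop
      (𝓝 ((expMeasure 1).real (Iic z))) := by
  rw [expMeasure_real_Iic one_pos, one_mul]
  split_ifs with hz
  · have h := tendsto_measureReal_mul_iInf_fin_mem_Icc hmeas hindep hunif
      tendsto_const_nhds tendsto_const_nhds (fun _ => le_rfl) (fun _ => hz)
    rw [neg_zero, exp_zero] at h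
    refine h.congr' ?_
    filter_upwards [eventually_ne_atTop 0] with n hn
    exact measureReal_iInf_fin_congr hmeas hunif hn (P := fun m => 0 ≤ n * m ∧ n * m ≤ z)
      fun m hm => ⟨And.right, fun h => ⟨mul_nonneg n.cast_nonneg hm.1.le, h⟩⟩
  · refine tendsto_const_nhds.congr' ?_
    filter_upwards [eventually_ne_atTop 0] with n hn
    refine (measureReal_iInf_fin_eq_zero hmeas hunif hn (P := fun m => n * m ≤ z)
      fun m hm h => ?_).symm
    nlinarith [mul_pos (Nat.cast_pos.2 (Nat.pos_of_ne_zero hn)) hm.1]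

lemma tendsto_measureReal_gofStatistic_le [IsFiniteMeasure μ] (hmeas : ∀ i, Measurable (p i))
    (hindep : iIndepFun p μ) (hunif : ∀ i, μ.map (p i) = volume.restrict (Ioo (0 : ℝ) 1))
    (z : ℝ) :
    Tendsto (fun n : ℕ => μ.real {ω | gofStatistic n (⨅ i : Fin n, p i ω) ≤ z}) atTop
      (𝓝 ((expMeasure 1).real {x | heavyTailFun x ≤ z})) := by
  rcases lt_or_ge z 0 with hz | hz
  · have hempty : {x | heavyTailFun x ≤ z} = ∅ :=
      eq_empty_of_forall_notMem fun x hx => hz.not_ge ((heavyTailFun_nonneg x).trans hx)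
    rw [hempty, measureReal_empty]
    refine tendsto_const_nhds.congr' ?_
    filter_upwards [eventually_ne_atTop 0] with n hn
    exact (measureReal_iInf_fin_eq_zero hmeas hunif hn (P := fun m => gofStatistic n m ≤ z)
      fun m hm h => hz.not_ge ((gofStatistic_nonneg n hm).trans h)).symm
  · rw [expMeasure_real_heavyTailFun_le hz]
    have hq : Tendsto (fun n : ℕ => 1 + 2 * z / n) atTop (𝓝 1) := by
      simpa using (tendsto_const_div_atTop_nhds_zero_nat (2 * z)).const_add 1
    have hqpos (n : ℕ) : 0 < 1 + 2 * z / n := by positivity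
    refine (tendsto_measureReal_mul_iInf_fin_mem_Icc hmeas hindep hunif
      ((continuousAt_quadRootLower one_ne_zero).tendsto.comp hq)
      ((continuousAt_quadRootUpper one_ne_zero).tendsto.comp hq)
      (fun n => (quadRootLower_pos (by linarith) (hqpos n)).le)
      (fun n => quadRootLower_le_quadRootUpper (hqpos n))).congr' ?_
    filter_upwards [eventually_ne_atTop 0] with n hn
    exact measureReal_iInf_fin_congr hmeas hunif hn fun m hm =>
      (gofStatistic_le_iff_mem_Icc hn hm hz).symm

end MinimumOfUniforms

/-- **Heavy tail of the untruncated GoF statistic.** For i.i.d. `Uniform(0,1)`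
variables `p 0, p 1, …` with minimum `p_(1)` of the first `n`:
(a) `n·p_(1)` converges in distribution to an `Exponential(1)` variable `E`;
(b) the statistic `n·K₂(1/n, p_(1)) = (1/2) n (1/n − p_(1))²/(p_(1)(1−p_(1)))`
converges in distribution to `(1/2)(1/√E − √E)²`;
(c) the limiting tail satisfies `P((1/2)(1/√E − √E)² ≥ z) ~ 1/(2z)` as `z → ∞`. -/
theorem untruncated_GoF_heavy_tail {Ω : Type*} [MeasurableSpace Ω]
    (μ : Measure Ω) [IsProbabilityMeasure μ]
    (p : ℕ → Ω → ℝ) (hmeas : ∀ i, Measurable (p i))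
    (hindep : iIndepFun (m := fun _ => (inferInstance : MeasurableSpace ℝ)) p μ)
    (hunif : ∀ i, Measure.map (p i) μ = volume.restrict (Set.Ioo (0:ℝ) 1)) :
    (∀ z : ℝ, Tendsto (fun n : ℕ =>
        (μ {ω | (n : ℝ) * (⨅ i : Fin n, p i ω) ≤ z}).toReal)
      atTop (𝓝 ((expMeasure 1 (Set.Iic z)).toReal))) ∧
    (∀ z : ℝ, Tendsto (fun n : ℕ =>
        (μ {ω | (1 / 2) * (n : ℝ) *
            ((1 / (n : ℝ) - ⨅ i : Fin n, p i ω) ^ 2 /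
              ((⨅ i : Fin n, p i ω) * (1 - ⨅ i : Fin n, p i ω))) ≤ z}).toReal)
      atTop (𝓝 ((expMeasure 1 {x | heavyTailFun x ≤ z}).toReal))) ∧
    Tendsto (fun z : ℝ => (expMeasure 1 {x | z ≤ heavyTailFun x}).toReal * (2 * z))
      atTop (𝓝 1) :=
  ⟨tendsto_measureReal_mul_iInf_fin_le hmeas hindep hunif,
    tendsto_measureReal_gofStatistic_le hmeas hindep hunif,
    tendsto_expMeasure_le_heavyTailFun_mul⟩
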